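/- For every c ∈ ℝ and σ ∈ ℝ, the vectors 𝔫₁(c,σ) and 𝔫₂(σ) are linearly independent in ℝ⁴ and the plane they span is totally null for the Petean bilinear form B_c: B_c(w, w') = 0 for all vectors w, w' in the span of 𝔫₁(c,σ) and 𝔫₂(σ). -/
import Mathlib


open Real

/-- The Petean bilinear form `B_c(u,v) = u₁v₃ + u₃v₁ + u₂v₄ + u₄v₂ + c(u₁v₁ + u₂v₂)`
on ℝ⁴; this is the Petean metric evaluated at a point where `f` takes the value `c`. -/
def Bpet (c : ℝ) (u v : Fin 4 → ℝ) : ℝ :=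
  u 0 * v 2 + u 2 * v 0 + u 1 * v 3 + u 3 * v 1 + c * (u 0 * v 0 + u 1 * v 1)

/-- `𝔫₁(c,σ) = (cos σ, sin σ, −(c/2)cos σ, −(c/2)sin σ)`. -/
noncomputable def frakn₁ (c σ : ℝ) : Fin 4 → ℝ :=
  ![Real.cos σ, Real.sin σ, -(c / 2) * Real.cos σ, -(c / 2) * Real.sin σ]

/-- `𝔫₂(σ) = (0, 0, sin σ, −cos σ)`. -/
noncomputable def frakn₂ (σ : ℝ) : Fin 4 → ℝ :=
  ![0, 0, Real.sin σ, -Real.cos σ]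

lemma Bpet_add_left (c : ℝ) (u v w : Fin 4 → ℝ) :
    Bpet c (u + v) w = Bpet c u w + Bpet c v w := by
  simp [Bpet]; ring

lemma Bpet_smul_left (c : ℝ) (a : ℝ) (u w : Fin 4 → ℝ) :
    Bpet c (a • u) w = a * Bpet c u w := by
  simp [Bpet]; ring

lemma Bpet_add_right (c : ℝ) (u v w : Fin 4 → ℝ) :
    Bpet c u (v + w) = Bpet c u v + Bpet c u w := by
  simp [Bpet]; ring

lemma Bpet_smul_right (c : ℝ) (a : ℝ) (u w : Fin 4 → ℝ) :
    Bpet c u (a • w) = a * Bpet c u w := by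
  simp [Bpet]; ring

/-- `𝔫₁(c,σ)` and `𝔫₂(σ)` are linearly independent and span a totally null plane
for the Petean bilinear form `B_c`. -/
theorem statement2 (c σ : ℝ) :
    LinearIndependent ℝ ![frakn₁ c σ, frakn₂ σ] ∧
    ∀ w ∈ Submodule.span ℝ ({frakn₁ c σ, frakn₂ σ} : Set (Fin 4 → ℝ)),
      ∀ w' ∈ Submodule.span ℝ ({frakn₁ c σ, frakn₂ σ} : Set (Fin 4 → ℝ)),
        Bpet c w w' = 0 := by
  constructor
  · rw [LinearIndependent.pair_iff]
    intro s t h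
    have h0 := congrFun h 0
    have h1 := congrFun h 1
    have h2 := congrFun h 2
    have h3 := congrFun h 3
    simp [frakn₁, frakn₂] at h0 h1 h2 h3
    have hs : s = 0 := by
      rcases h0 with hs | hc
      · exact hs
      rcases h1 with hs | hsn
      · exact hs
      nlinarith [Real.sin_sq_add_cos_sq σ]
    subst hs
    refine ⟨rfl, ?_⟩
    simp at h2 h3
    rcases h2 with ht | hsn
    · exact ht
    rcases h3 with ht | hc
    · exact ht
    nlinarith [Real.sin_sq_add_cos_sq σ]
  · have key : ∀ x ∈ ({frakn₁ c σ, frakn₂ σ} : Set (Fin 4 → ℝ)),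
        ∀ y ∈ ({frakn₁ c σ, frakn₂ σ} : Set (Fin 4 → ℝ)), Bpet c x y = 0 := by
      rintro x (rfl | rfl) y (rfl | rfl) <;>
        simp [Bpet, frakn₁, frakn₂] <;> ring
    intro w hw w' hw'
    induction hw using Submodule.span_induction with
    | mem x hx =>
      induction hw' using Submodule.span_induction with
      | mem y hy => exact key x hx y hy
      | zero => simp [Bpet]
      | add y z _ _ hy hz => rw [Bpet_add_right, hy, hz]; ring
      | smul a y _ hy => rw [Bpet_smul_right, hy]; ring
    | zero => simp [Bpet]
    | add y z _ _ hy hz => rw [Bpet_add_left, hy, hz]; ring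
    | smul a y _ hy => rw [Bpet_smul_left, hy]; ring
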